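/- Let G = (V,E) be a finite simple graph with edge coloring c : E → {1,...,p} and fix a color i with |E_i| > 2·(p choose 2), where E_i is the set of edges of color i. Let G' = (V, E \ E_i) with the induced coloring. Then the maximum number of colors in a cut of G equals one plus the maximum number of colors in a cut of G'. -/

import Mathlib

/-!
Deleting the colour `i` removes at most the colour `i` from any cut, which gives `≤`.
Conversely, let `S` be a cut of `G - E_i`. If an `i`-edge crosses `S`, then `S` gains the colour
`i` in `G`. Otherwise every `i`-edge lies on one side of `S`. If some endpoint `v` of an `i`-edge
carries no pinned colour (a colour of the cut all of whose cut edges pass through `v`), moving `v`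
to the other side keeps every colour of the cut and makes that `i`-edge cross. If every such
endpoint `v` carries a pinned colour `J v`, then `J` is injective on each side of `S`, because a
cut edge has just one endpoint on each side; so `uv ↦ {J u, J v}` embeds the `i`-edges of each
side into the 2-subsets of colours, and `|E_i| ≤ 2 (p choose 2)`, contrary to the assumption.
-/

open Set

/-- The edge cut of `S`: edges of `G` with exactly one endpoint in `S`. -/
def cutEdges {V : Type*} (G : SimpleGraph V) (S : Set V) : Set (Sym2 V) :=
  {e | e ∈ G.edgeSet ∧ ∃ u v, e = s(u, v) ∧ u ∈ S ∧ v ∉ S}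

open scoped symmDiff

theorem Sym2.injOn_map {α β : Type*} {J : α → β} {W : Set α} (hJ : InjOn J W) :
    InjOn (Sym2.map J) {e | ∀ x ∈ e, x ∈ W} := by
  intro e he e' he' heq
  induction e using Sym2.ind with | h a b =>
  induction e' using Sym2.ind with | h a' b' =>
  simp only [mem_ofPred_eq, Sym2.mem_iff, forall_eq_or_imp, forall_eq] at he he'
  rw [Sym2.map_mk, Sym2.map_mk, Sym2.eq_iff] at heq
  rcases heq with ⟨h1, h2⟩ | ⟨h1, h2⟩
  · rw [hJ he.1 he'.1 h1, hJ he.2 he'.2 h2]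
  · rw [hJ he.1 he'.2 h1, hJ he.2 he'.1 h2, Sym2.eq_swap]

theorem ncard_le_choose_two_of_injOn {α β : Type*} [Fintype β] {J : α → β} {W : Set α}
    (hJ : InjOn J W) {F : Set (Sym2 α)} (hF : ∀ e ∈ F, ¬e.IsDiag ∧ ∀ x ∈ e, x ∈ W) :
    F.ncard ≤ (Fintype.card β).choose 2 := by
  have hmaps : MapsTo (Sym2.map J) F {q | ¬q.IsDiag} := by
    intro e he
    induction e using Sym2.ind with | h a b =>
    obtain ⟨hdiag, hW⟩ := hF _ he
    rw [Sym2.mk_isDiag_iff] at hdiag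
    simpa [Sym2.map_mk] using
      hJ.ne (hW a (Sym2.mem_mk_left a b)) (hW b (Sym2.mem_mk_right a b)) hdiag
  calc F.ncard = (Sym2.map J '' F).ncard :=
        ((Sym2.injOn_map hJ).mono fun e he => (hF e he).2).ncard_image.symm
    _ ≤ {q : Sym2 β | ¬q.IsDiag}.ncard := ncard_le_ncard hmaps.image_subset
    _ = (Fintype.card β).choose 2 := by
        classical
        rw [← Sym2.card_subtype_not_diag, ← Nat.card_eq_fintype_card]
        rfl

theorem Nat.sSup_eq_sSup_add_one {A B : Set ℕ} (hB : B.Nonempty) (hBbdd : BddAbove B)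
    (hAB : ∀ a ∈ A, ∃ b ∈ B, a ≤ b + 1) (hBA : ∀ b ∈ B, ∃ a ∈ A, b + 1 ≤ a) :
    sSup A = sSup B + 1 := by
  have hA : ∀ a ∈ A, a ≤ sSup B + 1 := fun a ha =>
    let ⟨_, hb, hab⟩ := hAB a ha
    hab.trans (Nat.add_le_add_right (le_csSup hBbdd hb) 1)
  obtain ⟨a, ha, hle⟩ := hBA _ (Nat.sSup_mem hB hBbdd)
  exact le_antisymm (csSup_le ⟨a, ha⟩ hA) (hle.trans (le_csSup ⟨_, hA⟩ ha))

section Cut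

variable {V : Type*} {G H : SimpleGraph V} {S : Set V} {u v : V} {e : Sym2 V}

theorem mk_mem_cutEdges_iff :
    s(u, v) ∈ cutEdges G S ↔ G.Adj u v ∧ ¬(u ∈ S ↔ v ∈ S) := by
  simp only [cutEdges, mem_ofPred_eq, SimpleGraph.mem_edgeSet, Sym2.eq_iff]
  constructor
  · rintro ⟨h, a, b, (⟨rfl, rfl⟩ | ⟨rfl, rfl⟩), ha, hb⟩ <;> tauto
  · rintro ⟨h, hS⟩
    by_cases hu : u ∈ S
    · exact ⟨h, u, v, Or.inl ⟨rfl, rfl⟩, hu, by tauto⟩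
    · exact ⟨h, v, u, Or.inr ⟨rfl, rfl⟩, by tauto, hu⟩

theorem cutEdges_mono (h : H ≤ G) : cutEdges H S ⊆ cutEdges G S :=
  fun _ ⟨he, hcross⟩ => ⟨SimpleGraph.edgeSet_mono h he, hcross⟩

theorem cutEdges_deleteEdges (s : Set (Sym2 V)) :
    cutEdges (G.deleteEdges s) S = cutEdges G S \ s := by
  ext e
  simp only [cutEdges, SimpleGraph.edgeSet_deleteEdges, mem_ofPred_eq, mem_sdiff]
  tauto

theorem nonempty_and_ne_univ_of_mem_cutEdges (he : e ∈ cutEdges G S) :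
    S.Nonempty ∧ S ≠ univ := by
  obtain ⟨-, a, b, -, ha, hb⟩ := he
  exact ⟨⟨a, ha⟩, ne_univ_iff_exists_notMem S |>.2 ⟨b, hb⟩⟩

theorem eq_of_mem_of_mem_cutEdges {u' : V} (he : e ∈ cutEdges G S) (hu : u ∈ e) (hu' : u' ∈ e)
    (hside : u ∈ S ↔ u' ∈ S) : u = u' := by
  obtain ⟨-, a, b, rfl, ha, hb⟩ := he
  rcases Sym2.mem_iff.1 hu with rfl | rfl <;> rcases Sym2.mem_iff.1 hu' with rfl | rfl <;> tauto

theorem forall_mem_or_forall_notMem_of_notMem_cutEdges (he : e ∈ G.edgeSet)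
    (heS : e ∉ cutEdges G S) : (∀ x ∈ e, x ∈ S) ∨ ∀ x ∈ e, x ∉ S := by
  induction e using Sym2.ind with | h a b =>
  have hab : a ∈ S ↔ b ∈ S := by simpa [mk_mem_cutEdges_iff, G.mem_edgeSet.1 he] using heS
  simp only [Sym2.mem_iff, forall_eq_or_imp, forall_eq]
  tauto

theorem mem_cutEdges_symmDiff_singleton_iff (hv : v ∉ e) :
    e ∈ cutEdges G (S ∆ {v}) ↔ e ∈ cutEdges G S := by
  induction e using Sym2.ind with
  | h a b =>
    have ha : a ≠ v := fun h => hv (h ▸ Sym2.mem_mk_left a b)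
    have hb : b ≠ v := fun h => hv (h ▸ Sym2.mem_mk_right a b)
    simp [mk_mem_cutEdges_iff, mem_symmDiff, ha, hb]

theorem mem_cutEdges_symmDiff_singleton (he : e ∈ G.edgeSet) (heS : e ∉ cutEdges G S)
    (hv : v ∈ e) : e ∈ cutEdges G (S ∆ {v}) := by
  obtain ⟨u, rfl⟩ := Sym2.mem_iff_exists.1 hv
  have hvu : v ≠ u := G.ne_of_adj he
  rw [mk_mem_cutEdges_iff] at heS ⊢
  simp only [mem_symmDiff, mem_singleton_iff, hvu.symm] at heS ⊢
  tauto

theorem image_cutEdges_subset_image_cutEdges_symmDiff {β : Type*} {c : Sym2 V → β}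
    (h : ∀ j ∈ c '' cutEdges G S, ∃ e ∈ cutEdges G S, c e = j ∧ v ∉ e) :
    c '' cutEdges G S ⊆ c '' cutEdges G (S ∆ {v}) := by
  rintro _ ⟨e₀, he₀, rfl⟩
  obtain ⟨e, he, hce, hve⟩ := h _ ⟨e₀, he₀, rfl⟩
  exact ⟨e, (mem_cutEdges_symmDiff_singleton_iff hve).2 he, hce⟩

theorem ncard_le_two_mul_choose_two_of_pinned {β : Type*} [Fintype β] {c : Sym2 V → β}
    {F : Set (Sym2 V)} (hFG : F ⊆ G.edgeSet) (hFS : ∀ e ∈ F, e ∉ cutEdges G S)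
    (hpin : ∀ e ∈ F, ∀ v ∈ e,
      ∃ j ∈ c '' cutEdges H S, ∀ f ∈ cutEdges H S, c f = j → v ∈ f) :
    F.ncard ≤ 2 * (Fintype.card β).choose 2 := by
  obtain _ | _ := isEmpty_or_nonempty β
  · have : IsEmpty (Sym2 V) := c.isEmpty
    simp [F.eq_empty_of_isEmpty]
  set W := {v | ∃ e ∈ F, v ∈ e}
  choose! J hJ using fun v (hv : v ∈ W) => hpin _ hv.choose_spec.1 v hv.choose_spec.2
  have hinj : ∀ X ⊆ W, (∀ u ∈ X, ∀ u' ∈ X, u ∈ S ↔ u' ∈ S) → InjOn J X := by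
    intro X hXW hX u hu u' hu' hJu
    obtain ⟨⟨f, hf, hcf⟩, hpin_u⟩ := hJ u (hXW hu)
    exact eq_of_mem_of_mem_cutEdges hf (hpin_u f hf hcf)
      ((hJ u' (hXW hu')).2 f hf (hcf.trans hJu)) (hX u hu u' hu')
  have hsplit :
      F = {e ∈ F | ∀ x ∈ e, x ∈ W ∩ S} ∪ {e ∈ F | ∀ x ∈ e, x ∈ W \ S} := by
    refine Subset.antisymm (fun e he => ?_) (union_subset (sep_subset _ _) (sep_subset _ _))
    have hW : ∀ x ∈ e, x ∈ W := fun x hx => ⟨e, he, hx⟩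
    rcases forall_mem_or_forall_notMem_of_notMem_cutEdges (hFG he) (hFS e he) with hS | hS
    · exact Or.inl ⟨he, fun x hx => ⟨hW x hx, hS x hx⟩⟩
    · exact Or.inr ⟨he, fun x hx => ⟨hW x hx, hS x hx⟩⟩
  have hnotDiag : ∀ e ∈ F, ¬e.IsDiag := fun e he => G.not_isDiag_of_mem_edgeSet (hFG he)
  rw [hsplit]
  calc _ ≤ _ := ncard_union_le _ _
    _ ≤ (Fintype.card β).choose 2 + (Fintype.card β).choose 2 := add_le_add
        (ncard_le_choose_two_of_injOn
          (hinj _ inter_subset_left fun _ hu _ hu' => iff_of_true hu.2 hu'.2)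
          fun e he => ⟨hnotDiag e he.1, he.2⟩)
        (ncard_le_choose_two_of_injOn
          (hinj _ sdiff_subset fun _ hu _ hu' => iff_of_false hu.2 hu'.2)
          fun e he => ⟨hnotDiag e he.1, he.2⟩)
    _ = 2 * (Fintype.card β).choose 2 := (two_mul _).symm

section DeleteColor

variable {β : Type*} (G) (c : Sym2 V → β) (i : β)

theorem image_cutEdges_deleteEdges (S : Set V) :
    c '' cutEdges (G.deleteEdges {e | c e = i}) S = c '' cutEdges G S \ {i} := by
  rw [cutEdges_deleteEdges, ← image_sdiff_preimage]
  rfl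

theorem ncard_image_cutEdges_le_deleteEdges_add_one (S : Set V) :
    (c '' cutEdges G S).ncard ≤ (c '' cutEdges (G.deleteEdges {e | c e = i}) S).ncard + 1 := by
  rw [image_cutEdges_deleteEdges, ← ncard_singleton i]
  exact ncard_le_ncard_sdiff_add_ncard _ _

theorem exists_ncard_image_cutEdges_deleteEdges_add_one_le [Fintype β]
    (hi : 2 * (Fintype.card β).choose 2 < {e ∈ G.edgeSet | c e = i}.ncard) (S : Set V) :
    ∃ T : Set V, T.Nonempty ∧ T ≠ univ ∧
      (c '' cutEdges (G.deleteEdges {e | c e = i}) S).ncard + 1 ≤ (c '' cutEdges G T).ncard := by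
  set G' := G.deleteEdges {e | c e = i}
  suffices ∃ T, i ∈ c '' cutEdges G T ∧ c '' cutEdges G' S ⊆ c '' cutEdges G T by
    obtain ⟨T, hiT, hsub⟩ := this
    have ⟨e, he, _⟩ := hiT
    obtain ⟨hT, hTu⟩ := nonempty_and_ne_univ_of_mem_cutEdges he
    refine ⟨T, hT, hTu, ?_⟩
    rw [← ncard_sdiff_singleton_add_one hiT, add_le_add_iff_right]
    exact ncard_le_ncard fun x hx =>
      ⟨hsub hx, ((image_cutEdges_deleteEdges G c i S).subset hx).2⟩
  by_cases hcross : i ∈ c '' cutEdges G S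
  · exact ⟨S, hcross, image_mono (cutEdges_mono (G.deleteEdges_le _))⟩
  have hFS : ∀ e ∈ {e ∈ G.edgeSet | c e = i}, e ∉ cutEdges G S :=
    fun e he heS => hcross ⟨e, heS, he.2⟩
  by_cases hflip : ∃ e ∈ {e ∈ G.edgeSet | c e = i}, ∃ v ∈ e,
      ∀ j ∈ c '' cutEdges G' S, ∃ f ∈ cutEdges G' S, c f = j ∧ v ∉ f
  · obtain ⟨e, he, v, hv, hfree⟩ := hflip
    refine ⟨S ∆ {v}, ⟨e, mem_cutEdges_symmDiff_singleton he.1 (hFS e he) hv, he.2⟩, ?_⟩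
    exact (image_cutEdges_subset_image_cutEdges_symmDiff hfree).trans
      (image_mono (cutEdges_mono (G.deleteEdges_le _)))
  push Not at hflip
  exact absurd (ncard_le_two_mul_choose_two_of_pinned (fun e he => he.1) hFS hflip) hi.not_ge

end DeleteColor

end Cut

theorem stmt9_general {V : Type*}
    (G : SimpleGraph V) (p : ℕ) (c : Sym2 V → Fin p)
    (i : Fin p) (hi : 2 * Nat.choose p 2 < {e ∈ G.edgeSet | c e = i}.ncard) :
    sSup {n : ℕ | ∃ S : Set V, S.Nonempty ∧ S ≠ Set.univ ∧
        n = (c '' cutEdges G S).ncard} =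
      sSup {n : ℕ | ∃ S : Set V, S.Nonempty ∧ S ≠ Set.univ ∧
        n = (c '' cutEdges (G.deleteEdges {e | c e = i}) S).ncard} + 1 := by
  have hi' : 2 * (Fintype.card (Fin p)).choose 2 < {e ∈ G.edgeSet | c e = i}.ncard := by
    rwa [Fintype.card_fin]
  -- the lemma yields a proper nonempty cut even from `S = ∅`, so both sets are nonempty
  obtain ⟨S₀, hS₀, hS₀u, -⟩ :=
    exists_ncard_image_cutEdges_deleteEdges_add_one_le G c i hi' ∅
  refine Nat.sSup_eq_sSup_add_one ⟨_, S₀, hS₀, hS₀u, rfl⟩ ⟨p, ?_⟩ ?_ ?_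
  · rintro _ ⟨S, -, -, rfl⟩
    simpa using ncard_le_card (c '' cutEdges (G.deleteEdges {e | c e = i}) S)
  · rintro _ ⟨T, hT, hTu, rfl⟩
    exact ⟨_, ⟨T, hT, hTu, rfl⟩, ncard_image_cutEdges_le_deleteEdges_add_one G c i T⟩
  · rintro _ ⟨S, -, -, rfl⟩
    obtain ⟨T, hT, hTu, hle⟩ := exists_ncard_image_cutEdges_deleteEdges_add_one_le G c i hi' S
    exact ⟨_, ⟨T, hT, hTu, rfl⟩, hle⟩

/-- Correctness of the reduction rule: if color class `i` has more than `2 * (p choose 2)`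
edges, then the maximum number of colors in a cut of `G` equals one plus the maximum
number of colors in a cut of `G` with the edges of color `i` deleted. -/
theorem stmt9 {V : Type*} [Fintype V] (hV : 2 ≤ Fintype.card V)
    (G : SimpleGraph V) (p : ℕ) (c : Sym2 V → Fin p)
    (hsurj : ∀ j : Fin p, ∃ e ∈ G.edgeSet, c e = j)
    (i : Fin p) (hi : 2 * Nat.choose p 2 < {e ∈ G.edgeSet | c e = i}.ncard) :
    sSup {n : ℕ | ∃ S : Set V, S.Nonempty ∧ S ≠ Set.univ ∧
        n = (c '' cutEdges G S).ncard} =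
      sSup {n : ℕ | ∃ S : Set V, S.Nonempty ∧ S ≠ Set.univ ∧
        n = (c '' cutEdges (G.deleteEdges {e | c e = i}) S).ncard} + 1 :=
  stmt9_general G p c i hi
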